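/- The incidence coalgebra C = IC(X) of a locally finite preordered set X is cosemisimple (a direct sum of simple subcoalgebras) if and only if ≤ is symmetric, i.e., x ≤ y implies y ≤ x for all x, y ∈ X. -/

import Mathlib

open TensorProduct

/-- The underlying vector space of the incidence coalgebra `IC(X)`:
functions with finite support on the set of pairs `(x, y)` with `x ≤ y`. -/
abbrev IC (k X : Type*) [Field k] [Preorder X] : Type _ :=
  {p : X × X // p.1 ≤ p.2} →₀ k

/-- The basis element `e_{x,y}` of the incidence coalgebra. -/
noncomputable def e (k : Type*) {X : Type*} [Field k] [Preorder X] (x y : X) (h : x ≤ y) :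
    IC k X :=
  Finsupp.single ⟨(x, y), h⟩ 1

/-- The comultiplication `Δ(e_{x,y}) = Σ_{x ≤ z ≤ y} e_{x,z} ⊗ e_{z,y}`. -/
noncomputable def Δ (k : Type*) {X : Type*} [Field k] [Preorder X] [LocallyFiniteOrder X] :
    IC k X →ₗ[k] IC k X ⊗[k] IC k X :=
  Finsupp.lsum k fun p => LinearMap.toSpanSingleton k _
    (∑ z ∈ (Finset.Icc p.1.1 p.1.2).attach,
      e k p.1.1 z.1 (Finset.mem_Icc.mp z.2).1 ⊗ₜ[k] e k z.1 p.1.2 (Finset.mem_Icc.mp z.2).2)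

open Classical in
/-- The counit `ε(e_{x,y}) = δ_{x,y}`. -/
noncomputable def ε (k : Type*) {X : Type*} [Field k] [Preorder X] : IC k X →ₗ[k] k :=
  Finsupp.lsum k fun p => LinearMap.toSpanSingleton k k (if p.1.1 = p.1.2 then 1 else 0)

/-- The left action of `C* = Module.Dual k (IC k X)` on `C = IC k X` induced by the right
comodule structure: `c* → c = Σ c*(c₂) c₁`. -/
noncomputable def act (k : Type*) {X : Type*} [Field k] [Preorder X] [LocallyFiniteOrder X]
    (f : Module.Dual k (IC k X)) : IC k X →ₗ[k] IC k X :=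
  (TensorProduct.rid k (IC k X)).toLinearMap ∘ₗ TensorProduct.map LinearMap.id f ∘ₗ Δ k

/-- The right action of `C*` on `C`: `c ← c* = Σ c*(c₁) c₂`. -/
noncomputable def actR (k : Type*) {X : Type*} [Field k] [Preorder X] [LocallyFiniteOrder X]
    (f : Module.Dual k (IC k X)) : IC k X →ₗ[k] IC k X :=
  (TensorProduct.lid k (IC k X)).toLinearMap ∘ₗ TensorProduct.map f LinearMap.id ∘ₗ Δ k

/-- The dual basis functional `p_{x,y}`. -/
noncomputable def pfun (k : Type*) {X : Type*} [Field k] [Preorder X] (x y : X) (h : x ≤ y) :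
    Module.Dual k (IC k X) :=
  Finsupp.lapply ⟨(x, y), h⟩

/-- A subspace `D ⊆ IC(X)` is a subcoalgebra if `Δ(D) ⊆ D ⊗ D`. -/
def IsSubcoalgebra (k : Type*) {X : Type*} [Field k] [Preorder X] [LocallyFiniteOrder X]
    (D : Submodule k (IC k X)) : Prop :=
  ∀ c ∈ D, Δ k c ∈ LinearMap.range (TensorProduct.map D.subtype D.subtype)

/-- A subcoalgebra is simple if it is nonzero and has no nonzero proper subcoalgebras. -/
def IsSimpleSubcoalgebra (k : Type*) {X : Type*} [Field k] [Preorder X] [LocallyFiniteOrder X]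
    (D : Submodule k (IC k X)) : Prop :=
  IsSubcoalgebra k D ∧ D ≠ ⊥ ∧
    ∀ N : Submodule k (IC k X), N ≤ D → IsSubcoalgebra k N → N = ⊥ ∨ N = D

/-- The coradical of `IC(X)`: the sum of all its simple subcoalgebras. -/
noncomputable def coradical (k X : Type*) [Field k] [Preorder X] [LocallyFiniteOrder X] :
    Submodule k (IC k X) :=
  sSup {D : Submodule k (IC k X) | IsSimpleSubcoalgebra k D}

/-!
A subcoalgebra `D` of `IC(X)` is stable under both actions of the dual algebra, and acting by
the idempotents `p_{y,y}` on the right and `p_{x,x}` on the left cuts out the `(x,y)`-coefficient.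
Hence `D` contains every `e_{x,y}` occurring in one of its elements, and with `e_{u,v}` every
`e_{a,b}` for `u ≤ a ≤ b ≤ v`. So a simple subcoalgebra containing `e_{a,b}` is the span of the
`e_{u,v}` with `a ≤ u` and `v ≤ a`, which forces `b ≤ a`. Conversely, when `≤` is symmetric
these spans are simple, and together they contain every `e_{x,y}`.
-/

section IncidenceCoalgebra

variable {k X : Type*} [Field k] [Preorder X]

lemma e_ne_zero (x y : X) (h : x ≤ y) : e k x y h ≠ 0 :=
  Finsupp.single_ne_zero.mpr one_ne_zero

lemma single_eq_smul_e (x y : X) (h : x ≤ y) (b : k) :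
    Finsupp.single ⟨(x, y), h⟩ b = b • e k x y h := by
  rw [e, Finsupp.smul_single', mul_one]

lemma e_apply (x y : X) (h : x ≤ y) : e k x y h ⟨(x, y), h⟩ = 1 :=
  Finsupp.single_eq_same

open Classical in
lemma pfun_e (a b : X) (hab : a ≤ b) (u v : X) (huv : u ≤ v) :
    pfun k a b hab (e k u v huv) = if (u, v) = (a, b) then 1 else 0 := by
  simp [pfun, e, Finsupp.single_apply, Subtype.ext_iff]

lemma e_mem_supported_iff (S : Set {p : X × X // p.1 ≤ p.2}) (x y : X) (h : x ≤ y) :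
    e k x y h ∈ Finsupp.supported k k S ↔ ⟨(x, y), h⟩ ∈ S := by
  simp [e, Finsupp.mem_supported]

variable (k) in
/-- For symmetric `≤`, the span of the `e_{a,b}` with `a, b` in the equivalence class of `x`. -/
noncomputable def block (x : X) : Submodule k (IC k X) :=
  Finsupp.supported k k {p | x ≤ p.1.1 ∧ p.1.2 ≤ x}

lemma e_mem_block_iff {x a b : X} (hab : a ≤ b) : e k a b hab ∈ block k x ↔ x ≤ a ∧ b ≤ x :=
  e_mem_supported_iff _ a b hab

lemma block_ne_bot (x : X) : block k x ≠ ⊥ := fun h =>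
  e_ne_zero (k := k) x x le_rfl <| (Submodule.mem_bot k).mp <|
    h ▸ (e_mem_block_iff le_rfl).mpr ⟨le_rfl, le_rfl⟩

variable [LocallyFiniteOrder X]

lemma Δ_e (x y : X) (h : x ≤ y) :
    Δ k (e k x y h) = ∑ z ∈ (Finset.Icc x y).attach,
      e k x z.1 (Finset.mem_Icc.mp z.2).1 ⊗ₜ[k] e k z.1 y (Finset.mem_Icc.mp z.2).2 := by
  simp [e, Δ, LinearMap.toSpanSingleton_apply]

lemma act_e (f : Module.Dual k (IC k X)) (x y : X) (h : x ≤ y) :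
    act k f (e k x y h) = ∑ z ∈ (Finset.Icc x y).attach,
      f (e k z.1 y (Finset.mem_Icc.mp z.2).2) • e k x z.1 (Finset.mem_Icc.mp z.2).1 := by
  simp [act, Δ_e]

lemma actR_e (f : Module.Dual k (IC k X)) (x y : X) (h : x ≤ y) :
    actR k f (e k x y h) = ∑ z ∈ (Finset.Icc x y).attach,
      f (e k x z.1 (Finset.mem_Icc.mp z.2).1) • e k z.1 y (Finset.mem_Icc.mp z.2).2 := by
  simp [actR, Δ_e]

lemma act_pfun_e_of_le {a u v : X} (hua : u ≤ a) (hav : a ≤ v) :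
    act k (pfun k a v hav) (e k u v (hua.trans hav)) = e k u a hua := by
  classical
  rw [act_e, Finset.sum_eq_single_of_mem ⟨a, Finset.mem_Icc.mpr ⟨hua, hav⟩⟩ (Finset.mem_attach _ _)]
  · simp [pfun_e]
  · intro z _ hz
    simp [pfun_e, Subtype.ext_iff.not.mp hz]

lemma act_pfun_e_of_ne {a b u v : X} (hab : a ≤ b) (huv : u ≤ v) (hbv : b ≠ v) :
    act k (pfun k a b hab) (e k u v huv) = 0 := by
  classical
  simp [act_e, pfun_e, Ne.symm hbv]

lemma actR_pfun_e_of_le {b u v : X} (hub : u ≤ b) (hbv : b ≤ v) :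
    actR k (pfun k u b hub) (e k u v (hub.trans hbv)) = e k b v hbv := by
  classical
  rw [actR_e, Finset.sum_eq_single_of_mem ⟨b, Finset.mem_Icc.mpr ⟨hub, hbv⟩⟩ (Finset.mem_attach _ _)]
  · simp [pfun_e]
  · intro z _ hz
    simp [pfun_e, Subtype.ext_iff.not.mp hz]

lemma actR_pfun_e_of_ne {a b u v : X} (hab : a ≤ b) (huv : u ≤ v) (hau : a ≠ u) :
    actR k (pfun k a b hab) (e k u v huv) = 0 := by
  classical
  simp [actR_e, pfun_e, Ne.symm hau]

lemma actR_act_pfun_self (x y : X) (h : x ≤ y) (c : IC k X) :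
    actR k (pfun k x x le_rfl) (act k (pfun k y y le_rfl) c) = c ⟨(x, y), h⟩ • e k x y h := by
  classical
  suffices actR k (pfun k x x le_rfl) ∘ₗ act k (pfun k y y le_rfl) =
      LinearMap.toSpanSingleton k (IC k X) (e k x y h) ∘ₗ Finsupp.lapply ⟨(x, y), h⟩ from
    LinearMap.congr_fun this c
  refine Finsupp.lhom_ext fun ⟨⟨u, v⟩, huv⟩ b => ?_
  simp only [LinearMap.comp_apply, single_eq_smul_e, map_smul, Finsupp.lapply_apply,
    LinearMap.toSpanSingleton_apply]
  congr 1
  by_cases hv : v = y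
  · subst hv
    rw [act_pfun_e_of_le huv le_rfl]
    by_cases hu : u = x
    · subst hu
      rw [actR_pfun_e_of_le le_rfl huv, e_apply, one_smul]
    · rw [actR_pfun_e_of_ne le_rfl huv (Ne.symm hu)]
      simp [e, hu]
  · rw [act_pfun_e_of_ne le_rfl huv (Ne.symm hv)]
    simp [e, hv]

namespace IsSubcoalgebra

variable {D : Submodule k (IC k X)} (hD : IsSubcoalgebra k D)
include hD

lemma map_Δ_mem {g : IC k X ⊗[k] IC k X →ₗ[k] IC k X}
    (hg : ∀ a ∈ D, ∀ b ∈ D, g (a ⊗ₜ b) ∈ D) {c : IC k X} (hc : c ∈ D) : g (Δ k c) ∈ D := by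
  obtain ⟨t, ht⟩ := hD c hc
  rw [← ht]
  clear ht
  induction t using TensorProduct.induction_on with
  | zero => simp
  | tmul a b => simpa using hg a a.2 b b.2
  | add s t hs ht => simpa using D.add_mem hs ht

lemma act_mem (f : Module.Dual k (IC k X)) {c : IC k X} (hc : c ∈ D) : act k f c ∈ D :=
  hD.map_Δ_mem (g := (TensorProduct.rid k _).toLinearMap ∘ₗ TensorProduct.map LinearMap.id f)
    (fun a ha b _ => by simpa using D.smul_mem (f b) ha) hc

lemma actR_mem (f : Module.Dual k (IC k X)) {c : IC k X} (hc : c ∈ D) : actR k f c ∈ D :=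
  hD.map_Δ_mem (g := (TensorProduct.lid k _).toLinearMap ∘ₗ TensorProduct.map f LinearMap.id)
    (fun a _ b hb => by simpa using D.smul_mem (f a) hb) hc

lemma e_mem_of_apply_ne_zero {c : IC k X} (hc : c ∈ D) {x y : X} (h : x ≤ y)
    (hxy : c ⟨(x, y), h⟩ ≠ 0) : e k x y h ∈ D := by
  have hproj := hD.actR_mem (pfun k x x le_rfl) (hD.act_mem (pfun k y y le_rfl) hc)
  rw [actR_act_pfun_self x y h c] at hproj
  simpa [smul_smul, inv_mul_cancel₀ hxy] using D.smul_mem (c ⟨(x, y), h⟩)⁻¹ hproj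

lemma e_mem_of_le_of_le {u v : X} {huv : u ≤ v} (he : e k u v huv ∈ D) {a b : X}
    (hab : a ≤ b) (hua : u ≤ a) (hbv : b ≤ v) : e k a b hab ∈ D := by
  have hub : e k u b (hua.trans hab) ∈ D := by
    simpa [act_pfun_e_of_le (hua.trans hab) hbv] using hD.act_mem (pfun k b v hbv) he
  simpa [actR_pfun_e_of_le hua hab] using hD.actR_mem (pfun k u a hua) hub

end IsSubcoalgebra

lemma isSubcoalgebra_supported {S : Set {p : X × X // p.1 ≤ p.2}}
    (hS : ∀ p ∈ S, ∀ z (hz₁ : p.1.1 ≤ z) (hz₂ : z ≤ p.1.2),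
      ⟨(p.1.1, z), hz₁⟩ ∈ S ∧ ⟨(z, p.1.2), hz₂⟩ ∈ S) :
    IsSubcoalgebra k (Finsupp.supported k k S) := by
  intro c hc
  rw [← Finsupp.sum_single c, map_finsuppSum]
  refine Submodule.sum_mem _ fun p hp => ?_
  obtain ⟨⟨x, y⟩, hxy⟩ := p
  dsimp only
  have hpS := (Finsupp.mem_supported k c).mp hc hp
  rw [single_eq_smul_e, map_smul, Δ_e]
  refine Submodule.smul_mem _ _ (Submodule.sum_mem _ fun ⟨z, hz⟩ _ => ?_)
  have hz₁ := (Finset.mem_Icc.mp hz).1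
  have hz₂ := (Finset.mem_Icc.mp hz).2
  exact ⟨⟨e k x z hz₁, Finsupp.single_mem_supported k 1 (hS _ hpS z hz₁ hz₂).1⟩ ⊗ₜ
    ⟨e k z y hz₂, Finsupp.single_mem_supported k 1 (hS _ hpS z hz₁ hz₂).2⟩, rfl⟩

lemma isSubcoalgebra_block (x : X) : IsSubcoalgebra k (block k x) :=
  isSubcoalgebra_supported fun _ ⟨hx₁, hx₂⟩ _ hz₁ hz₂ => ⟨⟨hx₁, hz₂.trans hx₂⟩, hx₁.trans hz₁, hx₂⟩

lemma IsSubcoalgebra.block_le {D : Submodule k (IC k X)} (hD : IsSubcoalgebra k D)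
    {u v x : X} {huv : u ≤ v} (he : e k u v huv ∈ D) (hux : u ≤ x) (hxv : x ≤ v) :
    block k x ≤ D := by
  rw [block, Finsupp.supported_eq_span_single, Submodule.span_le]
  rintro _ ⟨⟨⟨a, b⟩, hab⟩, ⟨ha, hb⟩, rfl⟩
  exact hD.e_mem_of_le_of_le he hab (hux.trans ha) (hb.trans hxv)

lemma IsSimpleSubcoalgebra.eq_block {D : Submodule k (IC k X)} (hD : IsSimpleSubcoalgebra k D)
    {a b : X} {hab : a ≤ b} (he : e k a b hab ∈ D) : D = block k a := by
  obtain ⟨hsub, -, hmin⟩ := hD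
  have haa : e k a a le_rfl ∈ D := hsub.e_mem_of_le_of_le he le_rfl le_rfl hab
  have hle := hsub.block_le haa le_rfl le_rfl
  exact ((hmin _ hle (isSubcoalgebra_block a)).resolve_left (block_ne_bot a)).symm

lemma coradical_le_supported_ge :
    coradical k X ≤ Finsupp.supported k k {p | p.1.2 ≤ p.1.1} := by
  refine sSup_le fun D hD c hc ⟨⟨a, b⟩, hab⟩ hp => ?_
  have he := hD.1.e_mem_of_apply_ne_zero hc hab (Finsupp.mem_support_iff.mp hp)
  have hbl : e k a b hab ∈ block k a := hD.eq_block he ▸ he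
  exact ((e_mem_block_iff hab).mp hbl).2

lemma isSimpleSubcoalgebra_block (hsymm : ∀ x y : X, x ≤ y → y ≤ x) (x : X) :
    IsSimpleSubcoalgebra k (block k x) := by
  refine ⟨isSubcoalgebra_block x, block_ne_bot x, fun N hle hN => ?_⟩
  refine or_iff_not_imp_left.mpr fun hNbot => le_antisymm hle ?_
  obtain ⟨c, hcN, hc⟩ := (Submodule.ne_bot_iff N).mp hNbot
  obtain ⟨⟨⟨a, b⟩, hab⟩, hp⟩ := Finsupp.support_nonempty_iff.mpr hc
  obtain ⟨hxa, hbx⟩ := (Finsupp.mem_supported k c).mp (hle hcN) hp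
  have he := hN.e_mem_of_apply_ne_zero hcN hab (Finsupp.mem_support_iff.mp hp)
  exact hN.block_le he (hsymm x a hxa) (hsymm b x hbx)

end IncidenceCoalgebra

/-- The incidence coalgebra `C = IC(X)` of a locally finite preordered set
is cosemisimple (the sum of its simple subcoalgebras is all of `C`) if and only if `≤` is
symmetric, i.e. `x ≤ y → y ≤ x` for all `x, y`. -/
theorem statement18 (k X : Type*) [Field k] [Preorder X] [LocallyFiniteOrder X] :
    coradical k X = ⊤ ↔ ∀ x y : X, x ≤ y → y ≤ x := by
  constructor
  · intro htop x y hxy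
    have he : e k x y hxy ∈ coradical k X := htop ▸ Submodule.mem_top
    exact (e_mem_supported_iff _ x y hxy).mp (coradical_le_supported_ge he)
  · intro hsymm
    rw [eq_top_iff, ← Finsupp.supported_univ, Finsupp.supported_eq_span_single, Submodule.span_le]
    rintro _ ⟨⟨⟨x, y⟩, hxy⟩, -, rfl⟩
    have he : e k x y hxy ∈ block k x := (e_mem_block_iff hxy).mpr ⟨le_rfl, hsymm x y hxy⟩
    exact Submodule.mem_sSup_of_mem (isSimpleSubcoalgebra_block hsymm x) he
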